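/- arXiv:math/0609636 — 4 statements merged into one kernel-verified Lean document; each statement's English description precedes it below -/
import Mathlib

section
/- Let λ be a cardinal with λ = λ^κ. Then any linear order M of cardinality λ has at most λ cuts of cofinality (κ, κ). -/
universe u

open Cardinal

/-- The cofinality of a suborder `C`: the least cardinality of a cofinal subset of `C`. -/
noncomputable def downCof {M : Type u} [LinearOrder M] (C : Set M) : Cardinal.{u} :=
  sInf {c : Cardinal.{u} | ∃ A ⊆ C, (∀ x ∈ C, ∃ a ∈ A, x ≤ a) ∧ #A = c}

/-- The coinitiality of a suborder `C`: the least cardinality of a coinitial subset of `C`. -/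
noncomputable def upCof {M : Type u} [LinearOrder M] (C : Set M) : Cardinal.{u} :=
  sInf {c : Cardinal.{u} | ∃ B ⊆ C, (∀ x ∈ C, ∃ b ∈ B, b ≤ x) ∧ #B = c}

/-- If `lam = lam ^ kap` then a linear order `M` of cardinality `lam` has at
most `lam` cuts of cofinality `(kap, kap)`.  A cut is identified with its lower part `C`
(a lower set, with upper part `Cᶜ`). -/
theorem stmt_5 (lam kap : Cardinal.{u}) (hlam : lam ^ kap = lam)
    (M : Type u) [LinearOrder M] (hM : #M = lam) :
    #{C : Set M // IsLowerSet C ∧ downCof C = kap ∧ upCof Cᶜ = kap} ≤ lam := by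
  have key : ∀ C : {C : Set M // IsLowerSet C ∧ downCof C = kap ∧ upCof Cᶜ = kap},
      ∃ g : kap.out → M, (C : Set M) = {x | ∃ k, x ≤ g k} := by
    rintro ⟨C, hlow, hdc, -⟩
    have hne : {c : Cardinal.{u} | ∃ A ⊆ C, (∀ x ∈ C, ∃ a ∈ A, x ≤ a) ∧ #A = c}.Nonempty :=
      ⟨#C, C, le_refl C, fun x hx => ⟨x, hx, le_rfl⟩, rfl⟩
    have hmem : kap ∈ {c : Cardinal.{u} | ∃ A ⊆ C, (∀ x ∈ C, ∃ a ∈ A, x ≤ a) ∧ #A = c} := by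
      rw [← hdc]; exact csInf_mem hne
    obtain ⟨A, hAC, hcof, hA⟩ := hmem
    have : #A = #(kap.out) := by rw [hA, Cardinal.mk_out]
    obtain ⟨e⟩ := Cardinal.eq.mp this
    refine ⟨fun k => (e.symm k : M), ?_⟩
    ext x
    constructor
    · intro hx
      obtain ⟨a, haA, hxa⟩ := hcof x hx
      exact ⟨e ⟨a, haA⟩, by simpa using hxa⟩
    · rintro ⟨k, hxk⟩
      exact hlow hxk (hAC (e.symm k).2)
  choose g hg using key
  have hinj : Function.Injective g := by
    intro C C' h
    apply Subtype.ext
    rw [hg C, hg C', h]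
  calc #{C : Set M // IsLowerSet C ∧ downCof C = kap ∧ upCof Cᶜ = kap}
      ≤ #(kap.out → M) := Cardinal.mk_le_of_injective hinj
    _ = lam := by rw [← Cardinal.power_def, Cardinal.mk_out, hM, hlam]
end

section
/- Any linear order M of cardinality λ ≥ ℵ₀ has at most λ cuts of cofinality (σ₁, σ₂) with σ₁ ≠ σ₂ (σ₁, σ₂ regular infinite cardinals). -/
/-!
Call a cut asymmetric when its cofinality differs from its coinitiality. We bound the number of
asymmetric cuts by `max #M ℵ₀`, by induction on `#M`. Well-order `M` by `≺` in order type `#M`, so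
that every initial segment `M_m = {y | y ≺ m}` is smaller than `M`. If the upper part of an
asymmetric cut has a coinitial subset inside some `M_m`, the cut is determined by `m` and its
trace on `M_m`; that trace is either an asymmetric cut of `M_m`, counted by induction, or else
(the lower part then cannot be cofinally traced inside `M_m`) the trace of some `Iio x`. The case
of a lower part with a cofinal subset inside some `M_m` is dual. If neither happens, sending each
point `b` of a coinitial subset of the upper part to a point of the lower part above its trace on
`M_b` gives a cofinal subset of the lower part, and symmetrically, so the cut is not asymmetric.
-/

universe u

open Cardinal

open Set

section Cofinality

variable {M N : Type u} [LinearOrder M] [LinearOrder N]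

lemma downCof_le_mk {C A : Set M} (hAC : A ⊆ C) (hA : IsCofinalFor C A) : downCof C ≤ #A :=
  csInf_le' ⟨A, hAC, hA, rfl⟩

lemma exists_isCofinalFor_mk_eq_downCof (C : Set M) :
    ∃ A ⊆ C, IsCofinalFor C A ∧ #A = downCof C :=
  csInf_mem (s := {c | ∃ A ⊆ C, IsCofinalFor C A ∧ #A = c})
    ⟨#C, C, subset_rfl, IsCofinalFor.rfl, rfl⟩

lemma exists_isCoinitialFor_mk_eq_upCof (C : Set M) :
    ∃ B ⊆ C, IsCoinitialFor C B ∧ #B = upCof C :=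
  exists_isCofinalFor_mk_eq_downCof (M := Mᵒᵈ) C

lemma downCof_eq_cof (C : Set M) : downCof C = Order.cof C := by
  apply le_antisymm
  · obtain ⟨s, hs, hs_card⟩ := Order.exists_cof_eq C
    refine (downCof_le_mk (Subtype.coe_image_subset C s) fun x hx ↦ ?_).trans_eq ?_
    · obtain ⟨y, hy, hxy⟩ := hs ⟨x, hx⟩
      exact ⟨y, mem_image_of_mem _ hy, hxy⟩
    · rw [mk_image_eq Subtype.coe_injective, hs_card]
  · obtain ⟨A, hAC, hA, hA_card⟩ := exists_isCofinalFor_mk_eq_downCof C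
    refine (Order.cof_le (s := Subtype.val ⁻¹' A) fun x ↦ ?_).trans_eq ?_
    · obtain ⟨a, ha, hxa⟩ := hA x.2
      exact ⟨⟨a, hAC ha⟩, ha, hxa⟩
    · rwa [mk_preimage_of_injective_of_subset_range _ _ Subtype.coe_injective
        (by simpa using hAC)]

lemma downCof_eq_of_isCofinalFor {T C : Set M} (hTC : T ⊆ C) (hT : IsCofinalFor C T) :
    downCof T = downCof C := by
  rw [downCof_eq_cof, downCof_eq_cof]
  refine Order.cof_congr_of_strictMono (f := inclusion hTC) (fun _ _ h ↦ h) ?_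
  rintro ⟨x, hx⟩
  obtain ⟨t, ht, hxt⟩ := hT hx
  exact ⟨⟨t, hTC ht⟩, ⟨⟨t, ht⟩, rfl⟩, hxt⟩

lemma upCof_eq_of_isCoinitialFor {T C : Set M} (hTC : T ⊆ C) (hT : IsCoinitialFor C T) :
    upCof T = upCof C :=
  downCof_eq_of_isCofinalFor (M := Mᵒᵈ) hTC hT

lemma downCof_image (f : N ↪o M) (A : Set N) : downCof (f '' A) = downCof A := by
  rw [downCof_eq_cof, downCof_eq_cof]
  refine (Order.cof_congr_of_strictMono (f := fun a : A ↦ ⟨f a, mem_image_of_mem f a.2⟩)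
    (fun _ _ h ↦ f.lt_iff_lt.2 h) ?_).symm
  rintro ⟨_, a, ha, rfl⟩
  exact ⟨_, ⟨⟨a, ha⟩, rfl⟩, le_rfl⟩

lemma upCof_image (f : N ↪o M) (A : Set N) : upCof (f '' A) = upCof A :=
  downCof_image f.dual A

end Cofinality

lemma IsUpperSet.eq_upperClosure {α : Type*} [Preorder α] {U T : Set α} (hU : IsUpperSet U)
    (hTU : T ⊆ U) (hT : IsCoinitialFor U T) : U = upperClosure T := by
  ext z
  rw [SetLike.mem_coe, mem_upperClosure]
  exact ⟨fun hz ↦ hT hz, fun ⟨t, ht, htz⟩ ↦ hU htz (hTU ht)⟩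

def asymmetricCuts (M : Type u) [LinearOrder M] : Set (Set M) :=
  {C | IsLowerSet C ∧ downCof C ≠ upCof Cᶜ}

section Cuts

variable {M : Type u} [LinearOrder M]

lemma preimage_ofDual_compl_mem_asymmetricCuts {C : Set M} (hC : C ∈ asymmetricCuts M) :
    OrderDual.ofDual ⁻¹' Cᶜ ∈ asymmetricCuts Mᵒᵈ := by
  refine ⟨hC.1.compl, ?_⟩
  rw [← preimage_compl, compl_compl]
  exact hC.2.symm

lemma downCof_le_upCof_compl_of_forall_not (r : M → M → Prop) [Std.Trichotomous r]
    {C : Set M} (hC : ∀ m, ¬ IsCofinalFor C (C ∩ {y | r y m}))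
    (hCc : ∀ m, ¬ IsCoinitialFor Cᶜ (Cᶜ ∩ {y | r y m})) : downCof C ≤ upCof Cᶜ := by
  simp only [IsCofinalFor, IsCoinitialFor, not_forall, not_exists, not_and, not_le] at hC hCc
  choose x hxC hx using hC
  choose y hyC hy using hCc
  -- `x m ∈ C` lies above `C ∩ {y | r y m}` and `y m ∈ Cᶜ` lies below `Cᶜ ∩ {y | r y m}`
  obtain ⟨B, hBC, hB, hB_card⟩ := exists_isCoinitialFor_mk_eq_upCof Cᶜ
  refine (downCof_le_mk (A := x '' B) (image_subset_iff.2 fun b _ ↦ hxC b) fun z hz ↦ ?_).trans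
    (mk_image_le.trans hB_card.le)
  obtain ⟨b, hb, hbz⟩ := hB (hyC z)
  have hzb : r z b := by
    rcases trichotomous_of r z b with h | rfl | h
    · exact h
    · exact absurd hz (hBC hb)
    · exact absurd hbz (hy z b ⟨hBC hb, h⟩).not_ge
  exact ⟨x b, mem_image_of_mem x hb, (hx b z ⟨hz, hzb⟩).le⟩

lemma downCof_eq_upCof_compl_of_forall_not (r : M → M → Prop) [Std.Trichotomous r]
    {C : Set M} (hC : ∀ m, ¬ IsCofinalFor C (C ∩ {y | r y m}))
    (hCc : ∀ m, ¬ IsCoinitialFor Cᶜ (Cᶜ ∩ {y | r y m})) : downCof C = upCof Cᶜ := by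
  refine (downCof_le_upCof_compl_of_forall_not r hC hCc).antisymm ?_
  have : Std.Trichotomous (α := Mᵒᵈ) r := ‹_›
  have h := downCof_le_upCof_compl_of_forall_not (M := Mᵒᵈ) r (C := OrderDual.ofDual ⁻¹' Cᶜ)
    hCc (by rwa [← preimage_compl, compl_compl])
  rwa [← preimage_compl, compl_compl] at h

lemma asymmetricCuts_subset_union (r : M → M → Prop) [Std.Trichotomous r] :
    asymmetricCuts M ⊆
      {C ∈ asymmetricCuts M | ∃ m, IsCoinitialFor Cᶜ (Cᶜ ∩ {y | r y m})} ∪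
        {C ∈ asymmetricCuts M | ∃ m, IsCofinalFor C (C ∩ {y | r y m})} := by
  intro C hC
  by_contra hCAB
  simp only [mem_union, mem_ofPred_eq, hC, true_and, not_or, not_exists] at hCAB
  exact hC.2 (downCof_eq_upCof_compl_of_forall_not r hCAB.2 hCAB.1)

lemma preimage_val_mem_asymmetricCuts_or_eq_Iio {S C : Set M} (hC : C ∈ asymmetricCuts M)
    (hCS : IsCoinitialFor Cᶜ (Cᶜ ∩ S)) :
    Subtype.val ⁻¹' C ∈ asymmetricCuts S ∨
      ∃ x, (Subtype.val ⁻¹' C : Set S) = Subtype.val ⁻¹' Iio x := by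
  have hdown : downCof (Subtype.val ⁻¹' C : Set S) = downCof (C ∩ S) := by
    rw [← downCof_image (OrderEmbedding.subtype (· ∈ S)), OrderEmbedding.coe_subtype,
      Subtype.image_preimage_coe, inter_comm]
  have hup : upCof (Subtype.val ⁻¹' C : Set S)ᶜ = upCof Cᶜ := by
    rw [← preimage_compl, ← upCof_image (OrderEmbedding.subtype (· ∈ S)),
      OrderEmbedding.coe_subtype, Subtype.image_preimage_coe, inter_comm,
      upCof_eq_of_isCoinitialFor inter_subset_left hCS]
  by_cases hsym : downCof (C ∩ S) = upCof Cᶜ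
  · right
    have hnot : ¬ IsCofinalFor C (C ∩ S) := fun hcof ↦
      hC.2 (by rw [← downCof_eq_of_isCofinalFor inter_subset_left hcof, hsym])
    simp only [IsCofinalFor, not_forall, not_exists, not_and, not_le] at hnot
    obtain ⟨x, hx, hxS⟩ := hnot
    exact ⟨x, ext fun s ↦ ⟨fun hs ↦ hxS s ⟨hs, s.2⟩, fun hs ↦ hC.1 hs.le hx⟩⟩
  · left
    exact ⟨hC.1.preimage (Subtype.mono_coe _), by rwa [hdown, hup]⟩

lemma mk_asymmetricCuts_isCoinitialFor_le (S : Set M) :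
    #{C ∈ asymmetricCuts M | IsCoinitialFor Cᶜ (Cᶜ ∩ S)} ≤ #(asymmetricCuts S) + #M := by
  set P := {C ∈ asymmetricCuts M | IsCoinitialFor Cᶜ (Cᶜ ∩ S)}
  have hinj : InjOn (fun C : Set M ↦ (Subtype.val ⁻¹' C : Set S)) P := by
    intro C hC D hD hCD
    have hCDS : Cᶜ ∩ S = Dᶜ ∩ S := by
      simpa only [← preimage_compl, Subtype.image_preimage_coe, inter_comm S] using
        congrArg (Subtype.val '' ·ᶜ) hCD
    refine compl_injective ?_
    rw [hC.1.1.compl.eq_upperClosure inter_subset_left hC.2,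
      hD.1.1.compl.eq_upperClosure inter_subset_left hD.2, hCDS]
  have hmaps : MapsTo (fun C : Set M ↦ (Subtype.val ⁻¹' C : Set S)) P
      (asymmetricCuts S ∪ range fun x : M ↦ (Subtype.val ⁻¹' Iio x : Set S)) := by
    intro C hC
    rcases preimage_val_mem_asymmetricCuts_or_eq_Iio hC.1 hC.2 with h | ⟨x, hx⟩
    · exact Or.inl h
    · exact Or.inr ⟨x, hx.symm⟩
  calc #P = #((fun C : Set M ↦ (Subtype.val ⁻¹' C : Set S)) '' P) :=
        (mk_image_eq_of_injOn _ _ hinj).symm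
    _ ≤ #(asymmetricCuts S ∪ range fun x : M ↦ (Subtype.val ⁻¹' Iio x : Set S) : Set (Set S)) :=
        mk_le_mk_of_subset hmaps.image_subset
    _ ≤ #(asymmetricCuts S) + #M := (mk_union_le _ _).trans (add_le_add_right mk_range_le _)

lemma mk_asymmetricCuts_exists_isCoinitialFor_le (hM : ℵ₀ ≤ #M) (S : M → Set M)
    (hS : ∀ m, #(asymmetricCuts (S m)) ≤ #M) :
    #{C ∈ asymmetricCuts M | ∃ m, IsCoinitialFor Cᶜ (Cᶜ ∩ S m)} ≤ #M := by
  have hunion : {C ∈ asymmetricCuts M | ∃ m, IsCoinitialFor Cᶜ (Cᶜ ∩ S m)} =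
      ⋃ m, {C ∈ asymmetricCuts M | IsCoinitialFor Cᶜ (Cᶜ ∩ S m)} := by
    ext C
    simp only [mem_ofPred_eq, mem_iUnion, exists_and_left]
  calc _ ≤ sum fun m ↦ #{C ∈ asymmetricCuts M | IsCoinitialFor Cᶜ (Cᶜ ∩ S m)} :=
        hunion ▸ mk_iUnion_le_sum_mk
    _ ≤ sum fun _ : M ↦ #M := sum_le_sum _ _ fun m ↦
        (mk_asymmetricCuts_isCoinitialFor_le (S m)).trans (add_le_of_le hM (hS m) le_rfl)
    _ = #M := by rw [sum_const', mul_eq_self hM]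

lemma mk_asymmetricCuts_exists_isCofinalFor_le (hM : ℵ₀ ≤ #M) (S : M → Set M)
    (hS : ∀ m, #(asymmetricCuts (OrderDual.ofDual ⁻¹' S m)) ≤ #M) :
    #{C ∈ asymmetricCuts M | ∃ m, IsCofinalFor C (C ∩ S m)} ≤ #M := by
  refine le_trans ?_ (mk_asymmetricCuts_exists_isCoinitialFor_le (M := Mᵒᵈ) hM
    (fun m ↦ OrderDual.ofDual ⁻¹' S m) hS)
  refine (mk_le_mk_of_subset fun C hC ↦ ?_).trans
    (mk_preimage_of_injective (fun C : Set M ↦ OrderDual.ofDual ⁻¹' Cᶜ) _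
      (compl_injective.comp (preimage_injective.2 OrderDual.ofDual.surjective)))
  obtain ⟨hC, m, hm⟩ := hC
  refine ⟨preimage_ofDual_compl_mem_asymmetricCuts hC, m, ?_⟩
  rwa [← preimage_compl, compl_compl]

lemma mk_asymmetricCuts_le_of_forall_lt (hM : ℵ₀ ≤ #M)
    (ih : ∀ (N : Type u) [LinearOrder N], #N < #M → #(asymmetricCuts N) ≤ max #N ℵ₀) :
    #(asymmetricCuts M) ≤ #M := by
  obtain ⟨r, _, hr⟩ := exists_ord_eq M
  have hseg (m : M) : #{y | r y m} < #M := card_typein_lt m hr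
  have hsmall (L : Type u) [LinearOrder L] (S : Set L) (hS : #S < #M) :
      #(asymmetricCuts S) ≤ #M :=
    (ih S hS).trans (max_le hS.le hM)
  calc #(asymmetricCuts M)
      ≤ #({C ∈ asymmetricCuts M | ∃ m, IsCoinitialFor Cᶜ (Cᶜ ∩ {y | r y m})} ∪
          {C ∈ asymmetricCuts M | ∃ m, IsCofinalFor C (C ∩ {y | r y m})} : Set (Set M)) :=
        mk_le_mk_of_subset (asymmetricCuts_subset_union r)
    _ ≤ #M + #M := (mk_union_le _ _).trans <| add_le_add
        (mk_asymmetricCuts_exists_isCoinitialFor_le hM _ fun m ↦ hsmall M _ (hseg m))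
        (mk_asymmetricCuts_exists_isCofinalFor_le hM _ fun m ↦ hsmall Mᵒᵈ _ (hseg m))
    _ = #M := add_eq_self hM

end Cuts

theorem mk_asymmetricCuts_le (M : Type u) [LinearOrder M] :
    #(asymmetricCuts M) ≤ max #M ℵ₀ := by
  suffices h : ∀ κ : Cardinal.{u}, ∀ (M : Type u) [LinearOrder M], #M = κ →
      #(asymmetricCuts M) ≤ max #M ℵ₀ from h _ M rfl
  intro κ
  induction κ using WellFoundedLT.induction with
  | ind κ ih =>
    rintro M _ rfl
    rcases lt_or_ge #M ℵ₀ with hfin | hM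
    · refine (mk_le_mk_of_subset (subset_univ _)).trans ?_
      rw [mk_univ, mk_set]
      exact (power_lt_aleph0 natCast_lt_aleph0 hfin).le.trans (le_max_right _ _)
    · rw [max_eq_left hM]
      exact mk_asymmetricCuts_le_of_forall_lt hM fun N _ hN ↦ ih _ hN N rfl

/-- Any infinite linear order `M` has at most `#M` cuts of cofinality
`(σ₁, σ₂)` where `σ₁ ≠ σ₂` are regular infinite cardinals.  A cut is identified with its
lower part `C` (a lower set, with upper part `Cᶜ`). -/
theorem stmt_6 (M : Type u) [LinearOrder M] (hM : Cardinal.aleph0 ≤ #M) :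
    #{C : Set M // IsLowerSet C ∧ (downCof C).IsRegular ∧ (upCof Cᶜ).IsRegular ∧
        downCof C ≠ upCof Cᶜ} ≤ #M :=
  calc _ ≤ #(asymmetricCuts M) := mk_le_mk_of_subset fun _ hC ↦ ⟨hC.1, hC.2.2.2⟩
    _ ≤ #M := (mk_asymmetricCuts_le M).trans (max_le le_rfl hM)
end

section
/- Let δ < κ be a limit ordinal and let ⟨A_α : α < δ⟩ be an ⊆-increasing sequence of subsets of a linear order M_κ which is the union of a strictly ≺-increasing continuous chain ⟨M_i : i ≤ κ⟩. Suppose each A_α is nice, i.e. for every a ∈ M_κ \ A_α there is an index i(a, A_α) < κ such that the E_{A_α}-class of a is disjoint from M_{i(a,A_α)} but meets M_{i(a,A_α)+1}, and such that {b ∈ A_α : b < a} ∩ M_{i(a,A_α)} is cofinal in {b ∈ A_α : b < a} and {b ∈ A_α : a < b} ∩ M_{i(a,A_α)} is coinitial in {b ∈ A_α : a < b}. Assume further that α < β < δ and a ∈ M_κ \ A_β imply i(a, A_α) < i(a, A_β). Then A_δ := ⋃_{α<δ} A_α satisfies: for every a ∈ M_κ \ A_δ, the ordinal i(*) := sup_{α<δ}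 i(a, A_α) is < κ, is a limit ordinal, and the E_{A_δ}-class of a is disjoint from M_{i(*)}. -/
/-! If `a` lies outside every `A α`, its `E_{A_δ}`-class is contained in each `E_{A_α}`-class,
so it misses every `M_{i(a, A_α)}`; by continuity of the chain it then misses `M_{i(*)}`, since
`i(*)` is a limit ordinal: the indices `i(a, A_α)` strictly increase along the limit ordinal `δ`,
so their supremum is not attained. It is `< κ` because `|δ| < cf κ`. -/

universe u

open Cardinal

/-- The `E_A`-class of `a`: all `b ∉ A` inducing the same cut on `A` as `a`. -/
def eCls {L : Type u} [LinearOrder L] (A : Set L) (a : L) : Set L :=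
  {b | b ∉ A ∧ ∀ c ∈ A, (b < c ↔ a < c)}

open Order Set

theorem eCls_subset_eCls {L : Type u} [LinearOrder L] {A B : Set L} (hBA : B ⊆ A) (a : L) :
    eCls A a ⊆ eCls B a :=
  fun _ ⟨hbA, hcut⟩ => ⟨fun hb => hbA (hBA hb), fun c hc => hcut c (hBA hc)⟩

theorem isSuccLimit_csSup_of_forall_exists_gt {α : Type*} [ConditionallyCompleteLinearOrder α]
    {s : Set α} (hne : s.Nonempty) (hbdd : BddAbove s) (hgt : ∀ x ∈ s, ∃ y ∈ s, x < y) :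
    IsSuccLimit (sSup s) := by
  have lt_csSup : ∀ x ∈ s, x < sSup s := fun x hx =>
    let ⟨y, hy, hxy⟩ := hgt x hx
    hxy.trans_le (le_csSup hbdd hy)
  obtain ⟨x, hx⟩ := hne
  refine ⟨not_isMin_of_lt (lt_csSup x hx), fun b hb => ?_⟩
  obtain ⟨y, hy, hby⟩ := exists_lt_of_lt_csSup ⟨x, hx⟩ hb.lt
  exact hb.2 hby (lt_csSup y hy)

theorem isSuccLimit_csSup_image_Iio {α β : Type*} [ConditionallyCompleteLinearOrder α]
    [LinearOrder β] [SuccOrder β] {δ : β} (hδ : IsSuccLimit δ) {f : β → α}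
    (hf : StrictMonoOn f (Iio δ)) (hbdd : BddAbove (f '' Iio δ)) :
    IsSuccLimit (sSup (f '' Iio δ)) := by
  refine isSuccLimit_csSup_of_forall_exists_gt ?_ hbdd ?_
  · obtain ⟨i, hi⟩ := not_isMin_iff.1 hδ.not_isMin
    exact ⟨f i, mem_image_of_mem f hi⟩
  · rintro _ ⟨i, hi, rfl⟩
    exact ⟨f (succ i), mem_image_of_mem f (hδ.succ_lt hi),
      hf hi (hδ.succ_lt hi) (lt_succ_of_not_isMax hi.not_isMax)⟩

theorem Ordinal.sSup_image_Iio_lt_of_card_lt_cof {δ a : Ordinal.{u}}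
    {f : Ordinal.{u} → Ordinal.{u}} (hδ : δ.card < a.cof) (hf : ∀ i < δ, f i < a) :
    sSup (f '' Iio δ) < a := by
  refine sSup_lt_of_lt_cof (mk_image_le.trans_lt ?_) (by rintro _ ⟨i, hi, rfl⟩; exact hf i hi)
  rwa [Cardinal.mk_Iio_ordinal, ← lift_cof, Cardinal.lift_lt]

theorem subset_biUnion_of_eq_biUnion_lt_csSup {α ι : Type*} [ConditionallyCompleteLinearOrder ι]
    {M : ι → Set α} (hM : Monotone M) {s : Set ι} (hs : s.Nonempty)
    (hcont : M (sSup s) = ⋃ j < sSup s, M j) : M (sSup s) ⊆ ⋃ i ∈ s, M i := by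
  rw [hcont]
  refine iUnion₂_subset fun j hj => ?_
  obtain ⟨i, hi, hji⟩ := exists_lt_of_lt_csSup hs hj
  exact (hM hji.le).trans (subset_biUnion_of_mem hi)

theorem stmt_7_general (L : Type u) [LinearOrder L] (kap delta : Ordinal.{u})
    (hlim : Order.IsSuccLimit delta) (hcof : delta.card < kap.cof)
    (Mc : Ordinal.{u} → Set L)
    (hMmono : ∀ i j, i ≤ j → Mc i ⊆ Mc j)
    (hMcont : ∀ i : Ordinal.{u}, Order.IsSuccLimit i → Mc i = ⋃ j, ⋃ (_ : j < i), Mc j)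
    (A : Ordinal.{u} → Set L)
    (idx : L → Ordinal.{u} → Ordinal.{u})
    (hnice : ∀ α < delta, ∀ a ∉ A α,
      idx a α < kap ∧
        eCls (A α) a ∩ Mc (idx a α) = ∅ ∧
        (eCls (A α) a ∩ Mc (idx a α + 1)).Nonempty ∧
        (∀ b ∈ A α, b < a → ∃ b' ∈ A α ∩ Mc (idx a α), b ≤ b' ∧ b' < a) ∧
        (∀ b ∈ A α, a < b → ∃ b' ∈ A α ∩ Mc (idx a α), b' ≤ b ∧ a < b'))
    (hincr : ∀ α β, α < β → β < delta → ∀ a ∉ A β, idx a α < idx a β) :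
    ∀ a ∉ ⋃ α, ⋃ (_ : α < delta), A α,
      sSup ((fun α => idx a α) '' Set.Iio delta) < kap ∧
        Order.IsSuccLimit (sSup ((fun α => idx a α) '' Set.Iio delta)) ∧
        eCls (⋃ α, ⋃ (_ : α < delta), A α) a ∩
            Mc (sSup ((fun α => idx a α) '' Set.Iio delta)) = ∅ := by
  intro a ha
  have haA : ∀ α < delta, a ∉ A α := fun α hα h => ha (mem_iUnion₂_of_mem hα h)
  have hidx_lt : ∀ α < delta, idx a α < kap := fun α hα => (hnice α hα a (haA α hα)).1
  have hmono : StrictMonoOn (idx a) (Iio delta) :=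
    fun α _ β hβ hαβ => hincr α β hαβ hβ a (haA β hβ)
  have hsup_lim : IsSuccLimit (sSup (idx a '' Iio delta)) :=
    isSuccLimit_csSup_image_Iio hlim hmono
      ⟨kap, by rintro _ ⟨α, hα, rfl⟩; exact (hidx_lt α hα).le⟩
  refine ⟨Ordinal.sSup_image_Iio_lt_of_card_lt_cof hcof hidx_lt, hsup_lim, ?_⟩
  refine eq_empty_of_forall_notMem fun b ⟨hbE, hbM⟩ => ?_
  obtain ⟨_, ⟨α, hα, rfl⟩, hbα⟩ := mem_iUnion₂.1 <|
    subset_biUnion_of_eq_biUnion_lt_csSup (fun i j => hMmono i j)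
      ⟨idx a 0, mem_image_of_mem (idx a) hlim.pos⟩ (hMcont _ hsup_lim) hbM
  exact (hnice α hα a (haA α hα)).2.1.subset
    ⟨eCls_subset_eCls (subset_iUnion₂ (s := fun α (_ : α < delta) => A α) α hα) a hbE, hbα⟩

/-- the union of an increasing chain of nice sets of length a limit
ordinal `δ < κ` (with `δ.card < cf κ`) is nice: for `a` outside the union, the supremum
`i(*)` of the indices `i(a, A_α)` is a limit ordinal `< κ`, and the `E_{A_δ}`-class of
`a` is disjoint from `M_{i(*)}`. -/
theorem stmt_7 (L : Type u) [LinearOrder L] (kap delta : Ordinal.{u})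
    (hdelta : delta < kap) (hlim : Order.IsSuccLimit delta) (hcof : delta.card < kap.cof)
    (Mc : Ordinal.{u} → Set L)
    (hMmono : ∀ i j, i ≤ j → Mc i ⊆ Mc j)
    (hMcont : ∀ i : Ordinal.{u}, Order.IsSuccLimit i → Mc i = ⋃ j, ⋃ (_ : j < i), Mc j)
    (A : Ordinal.{u} → Set L)
    (hAmono : ∀ α β, α ≤ β → β < delta → A α ⊆ A β)
    (idx : L → Ordinal.{u} → Ordinal.{u})
    (hnice : ∀ α < delta, ∀ a ∉ A α,
      idx a α < kap ∧
        eCls (A α) a ∩ Mc (idx a α) = ∅ ∧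
        (eCls (A α) a ∩ Mc (idx a α + 1)).Nonempty ∧
        (∀ b ∈ A α, b < a → ∃ b' ∈ A α ∩ Mc (idx a α), b ≤ b' ∧ b' < a) ∧
        (∀ b ∈ A α, a < b → ∃ b' ∈ A α ∩ Mc (idx a α), b' ≤ b ∧ a < b'))
    (hincr : ∀ α β, α < β → β < delta → ∀ a ∉ A β, idx a α < idx a β) :
    ∀ a ∉ ⋃ α, ⋃ (_ : α < delta), A α,
      sSup ((fun α => idx a α) '' Set.Iio delta) < kap ∧
        Order.IsSuccLimit (sSup ((fun α => idx a α) '' Set.Iio delta)) ∧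
        eCls (⋃ α, ⋃ (_ : α < delta), A α) a ∩
            Mc (sSup ((fun α => idx a α) '' Set.Iio delta)) = ∅ :=
  stmt_7_general L kap delta hlim hcof Mc hMmono hMcont A idx hnice hincr
end

section
/- Let (M, ā) be an (I,T,φ)-candidate and Γ ∈ Ω_{M,ā} maximal. If ψ(x, c̄) is a formula with parameters from M and η ∈ fin(I) is such that Γ is consistent with (∃x)[P(x) ∧ ψ(x,c̄) ∧ ⋀_{t∈dom η} φ(x,ā_t)^{η(t)}], then there is ν ∈ fin(I) extending η such that Γ is inconsistent with (∃x)[P(x) ∧ ¬ψ(x,c̄) ∧ ⋀_{t∈dom ν} φ(x,ā_t)^{ν(t)}]. -/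
universe u

open Cardinal FirstOrder FirstOrder.Language

/-- A model of the expanded language: an `L`-structure `carrier` together with an
elementary embedding of `M` and a set `P` interpreting the new unary predicate. -/
structure ExpModel (L : FirstOrder.Language.{u, u}) (M : Type u) [L.Structure M] :
    Type (u + 1) where
  carrier : Type u
  [str : L.Structure carrier]
  emb : L.ElementaryEmbedding M carrier
  P : Set carrier

attribute [instance] ExpModel.str

/-- An index coding a sentence `¬∃x [P(x) ∧ psi(x, par) ∧ ⋀_{t ∈ J} phi(x, ā_t)^{η(t)}]`
of `Φ_{M,ā}`. -/
structure PhiIdx (L : FirstOrder.Language.{u, u}) (M : Type u) (I : Type u) :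
    Type (u + 1) where
  k : ℕ
  psi : L.Formula (Unit ⊕ Fin k)
  par : Fin k → M
  J : Finset I
  eta : I → Bool

/-- `N` satisfies `Γ_{M,ā}`. -/
def SatBase {L : FirstOrder.Language.{u, u}} {M : Type u} [L.Structure M] {I : Type u}
    {m : ℕ} (phi : L.Formula (Fin m ⊕ Unit)) (abar : I → Fin m → M)
    (N : ExpModel L M) : Prop :=
  ∀ (J : Finset I) (η : I → Bool), ∃ b ∈ N.P, ∀ t ∈ J,
    (phi.Realize (Sum.elim (fun j => N.emb (abar t j)) fun _ => b) ↔ η t = true)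

/-- `N` satisfies the negative sentence coded by `ix ∈ Φ_{M,ā}`. -/
def SatNeg {L : FirstOrder.Language.{u, u}} {M : Type u} [L.Structure M] {I : Type u}
    {m : ℕ} (phi : L.Formula (Fin m ⊕ Unit)) (abar : I → Fin m → M)
    (N : ExpModel L M) (ix : PhiIdx L M I) : Prop :=
  ¬ ∃ b ∈ N.P,
      ix.psi.Realize (Sum.elim (fun _ : Unit => b) fun j => N.emb (ix.par j)) ∧
      ∀ t ∈ ix.J, (phi.Realize (Sum.elim (fun j => N.emb (abar t j)) fun _ => b) ↔
        ix.eta t = true)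

/-- `Γ_{M,ā} ∪ Φ₀` is consistent (satisfiable). -/
def SatOmega {L : FirstOrder.Language.{u, u}} {M : Type u} [L.Structure M] {I : Type u}
    {m : ℕ} (phi : L.Formula (Fin m ⊕ Unit)) (abar : I → Fin m → M)
    (Φ₀ : Set (PhiIdx L M I)) : Prop :=
  ∃ N : ExpModel L M, SatBase phi abar N ∧ ∀ ix ∈ Φ₀, SatNeg phi abar N ix

/-- `Γ_{M,ā} ∪ Φ₀` together with
`∃x [P(x) ∧ psi(x, par)^{pos} ∧ ⋀_{t ∈ J} phi(x, ā_t)^{η(t)}]` is consistent. -/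
def SatWith {L : FirstOrder.Language.{u, u}} {M : Type u} [L.Structure M] {I : Type u}
    {m : ℕ} (phi : L.Formula (Fin m ⊕ Unit)) (abar : I → Fin m → M)
    (Φ₀ : Set (PhiIdx L M I)) (k : ℕ) (psi : L.Formula (Unit ⊕ Fin k))
    (par : Fin k → M) (J : Finset I) (η : I → Bool) (pos : Bool) : Prop :=
  ∃ N : ExpModel L M, SatBase phi abar N ∧ (∀ ix ∈ Φ₀, SatNeg phi abar N ix) ∧
    ∃ b ∈ N.P,
      ((psi.Realize (Sum.elim (fun _ : Unit => b) fun j => N.emb (par j))) ↔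
        pos = true) ∧
      ∀ t ∈ J, (phi.Realize (Sum.elim (fun j => N.emb (abar t j)) fun _ => b) ↔
        η t = true)

/-- Let `(M, ā)` be an `(I, T, phi)`-candidate and `Γ = Γ_{M,ā} ∪ Φ₀` a
maximal member of `Ω_{M,ā}`.  If `η ∈ fin(I)` is such that `Γ` is consistent with
`∃x [P(x) ∧ psi(x, c̄) ∧ ⋀_{t ∈ dom η} phi(x, ā_t)^{η(t)}]`, then some `ν ∈ fin(I)`
extending `η` makes `Γ` inconsistent with
`∃x [P(x) ∧ ¬psi(x, c̄) ∧ ⋀_{t ∈ dom ν} phi(x, ā_t)^{ν(t)}]`. -/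
theorem stmt_12 (L : FirstOrder.Language.{u, u}) (T : L.Theory) (hcomp : T.IsComplete)
    (m : ℕ) (phi : L.Formula (Fin m ⊕ Unit))
    (M : Type u) [L.Structure M] (hMT : M ⊨ T)
    (I : Type u) [LinearOrder I] [Infinite I]
    (abar : I → Fin m → M)
    (hindisc : ∀ (n : ℕ) (ψ : L.Formula (Fin n × Fin m)) (s t : Fin n ↪o I),
      ((ψ.Realize fun p => abar (s p.1) p.2) ↔ (ψ.Realize fun p => abar (t p.1) p.2)))
    (hindep : ∀ (J : Finset I) (η : I → Bool), ∃ b : M, ∀ t ∈ J,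
      (phi.Realize (Sum.elim (abar t) fun _ => b) ↔ η t = true))
    (Φ₀ : Set (PhiIdx L M I)) (hΦ₀ : SatOmega phi abar Φ₀)
    (hmax : ∀ Φ₁ : Set (PhiIdx L M I), Φ₀ ⊆ Φ₁ → SatOmega phi abar Φ₁ → Φ₁ = Φ₀)
    (k : ℕ) (psi : L.Formula (Unit ⊕ Fin k)) (par : Fin k → M)
    (J : Finset I) (η : I → Bool)
    (hcons : SatWith phi abar Φ₀ k psi par J η true) :
    ∃ (J' : Finset I) (η' : I → Bool), J ⊆ J' ∧ (∀ t ∈ J, η' t = η t) ∧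
      ¬ SatWith phi abar Φ₀ k psi par J' η' false := by
  classical
  by_contra hgoal
  push_neg at hgoal
  -- hgoal : every extension (J', η') of (J, η) keeps the negative sentence consistent
  obtain ⟨N, hbase, hneg⟩ := hΦ₀
  -- Step A: Γ ∪ {¬∃x[P ∧ ψ ∧ η-pattern]} is inconsistent
  have hApos : ¬ SatOmega phi abar (Φ₀ ∪ {(⟨k, psi, par, J, η⟩ : PhiIdx L M I)}) := by
    intro hsat
    have heq := hmax _ Set.subset_union_left hsat
    have hmem : (⟨k, psi, par, J, η⟩ : PhiIdx L M I) ∈ Φ₀ := by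
      rw [← heq]; exact Set.mem_union_right _ rfl
    obtain ⟨N₀, _, hn, b, hbP, hψ, hpat⟩ := hcons
    exact hn _ hmem ⟨b, hbP, hψ.mpr rfl, hpat⟩
  -- Step B: every extension (J', η') forces, in every model of Γ, a ¬ψ-witness
  have hB : ∀ (J' : Finset I) (η' : I → Bool), J ⊆ J' → (∀ t ∈ J, η' t = η t) →
      ∃ b ∈ N.P, ¬ psi.Realize (Sum.elim (fun _ : Unit => b) fun j => N.emb (par j)) ∧
        ∀ t ∈ J', (phi.Realize (Sum.elim (fun j => N.emb (abar t j)) fun _ => b) ↔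
          η' t = true) := by
    intro J' η' hJ hag
    have hnot : ¬ SatOmega phi abar (Φ₀ ∪ {(⟨k, psi.not, par, J', η'⟩ : PhiIdx L M I)}) := by
      intro hsat
      have heq := hmax _ Set.subset_union_left hsat
      have hmem : (⟨k, psi.not, par, J', η'⟩ : PhiIdx L M I) ∈ Φ₀ := by
        rw [← heq]; exact Set.mem_union_right _ rfl
      obtain ⟨N₁, _, hn1, b, hbP, hψ, hpat⟩ := hgoal J' η' hJ hag
      refine hn1 _ hmem ⟨b, hbP, ?_, hpat⟩
      show (psi.not).Realize _
      rw [Formula.realize_not]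
      intro h
      exact absurd (hψ.mp h) (by simp)
    by_contra hno
    apply hnot
    refine ⟨N, hbase, ?_⟩
    intro ix hix
    rcases hix with hix | hix
    · exact hneg ix hix
    · have : ix = (⟨k, psi.not, par, J', η'⟩ : PhiIdx L M I) := hix
      subst this
      rintro ⟨b, hbP, h1, h2⟩
      exact hno ⟨b, hbP, Formula.realize_not.mp h1, h2⟩
  -- Step C: shrink P in N to kill all ψ-witnesses with pattern η on J
  apply hApos
  refine ⟨⟨N.carrier, N.emb,
    {b ∈ N.P | ¬ (psi.Realize (Sum.elim (fun _ : Unit => b) fun j => N.emb (par j)) ∧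
      ∀ t ∈ J, (phi.Realize (Sum.elim (fun j => N.emb (abar t j)) fun _ => b) ↔
        η t = true))}⟩, ?_, ?_⟩
  · -- SatBase still holds for the shrunken P
    intro J' η'
    by_cases hc : J ⊆ J' ∧ ∀ t ∈ J, η' t = η t
    · obtain ⟨b, hbP, hnψ, hpat⟩ := hB J' η' hc.1 hc.2
      exact ⟨b, ⟨hbP, fun h => hnψ h.1⟩, fun t ht => hpat t ht⟩
    · set ν : I → Bool := fun t => if t ∈ J' then η' t else !η t with hν
      obtain ⟨b, hbP, hpat⟩ := hbase (J ∪ J') ν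
      have hfind : ∃ t ∈ J, ν t ≠ η t := by
        rcases not_and_or.mp hc with h | h
        · obtain ⟨t, htJ, htJ'⟩ := Finset.not_subset.mp h
          refine ⟨t, htJ, ?_⟩
          simp only [hν, if_neg htJ']
          cases η t <;> simp
        · push_neg at h
          obtain ⟨t, htJ, hne⟩ := h
          refine ⟨t, htJ, ?_⟩
          by_cases ht' : t ∈ J'
          · simpa only [hν, if_pos ht'] using hne
          · simp only [hν, if_neg ht']
            cases η t <;> simp
      obtain ⟨t0, ht0J, ht0ne⟩ := hfind
      refine ⟨b, ⟨hbP, ?_⟩, fun t ht => ?_⟩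
      · rintro ⟨-, hpatη⟩
        have h1 := hpat t0 (Finset.mem_union_left _ ht0J)
        have h2 := hpatη t0 ht0J
        apply ht0ne
        have : (ν t0 = true) ↔ (η t0 = true) := h1.symm.trans h2
        cases hn : ν t0 <;> cases he : η t0 <;> simp_all
      · have := hpat t (Finset.mem_union_right _ ht)
        simpa only [hν, if_pos ht] using this
  · -- SatNeg for Φ₀ ∪ {ψ-blocking index}
    intro ix hix
    rcases hix with hix | hix
    · rintro ⟨b, hbP, h1, h2⟩
      exact hneg ix hix ⟨b, hbP.1, h1, h2⟩
    · have : ix = (⟨k, psi, par, J, η⟩ : PhiIdx L M I) := hix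
      subst this
      rintro ⟨b, hbP, h1, h2⟩
      exact hbP.2 ⟨h1, h2⟩
end
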